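/- Let x = c·x′ and y = c′·y′ be nonempty strings such that ssp_{x′} = ssp_{y′} (so in particular |x| = |y|). Then: (a) ssp_x = ssp_y if and only if π(x) = π(y); and (b) ssp_x ≺ ssp_y if and only if π(x) < π(y), where ∞ is greater than every natural number. -/

import Mathlib

open scoped ENat

variable {α : Type*}

/-- `w` is a palindrome. -/
def IsPal (w : List α) : Prop := w.reverse = w

/-- The substring `w[i..j]`, 1-indexed, inclusive; empty if `i > j`. -/
def sub (w : List α) (i j : ℕ) : List α := (w.take j).drop (i - 1)

/-- Two strings of the same length pal-match: they agree on which substrings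
`w[i..j]` (for `1 ≤ i < j ≤ |w|`) are palindromes. -/
def PalMatch (x y : List α) : Prop :=
  x.length = y.length ∧
    ∀ i j, 1 ≤ i → i < j → j ≤ x.length → (IsPal (sub x i j) ↔ IsPal (sub y i j))

/-- `sspAt w i` : length of the shortest palindromic suffix of `w[1..i]`
of length at least 2, or `∞` if none exists. -/
noncomputable def sspAt (w : List α) (i : ℕ) : ℕ∞ :=
  sInf {ℓ : ℕ∞ | ∃ u : List α, u <:+ w.take i ∧ IsPal u ∧ 2 ≤ u.length ∧ (u.length : ℕ∞) = ℓ}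

/-- The ssp-encoding of `w` as a sequence of length `|w|` over `ℕ ∪ {∞}`. -/
noncomputable def ssp (w : List α) : List ℕ∞ :=
  (List.range w.length).map fun k => sspAt w (k + 1)

/-- The palindromic proper suffixes of `w` (including the empty suffix). -/
def palSufs (w : List α) : Set (List α) :=
  {u | u <:+ w ∧ IsPal u ∧ u.length < w.length}

/-- The suffix-pal-groups of `w`, identified with the character `w[|w|-|u|]`
immediately to the left of their members. -/
def palSufGroups (w : List α) : Set (Option α) :=
  {c | ∃ u ∈ palSufs w, w[w.length - u.length - 1]? = c}

/-- Length of the representative (shortest member) of the suffix-pal-group of `w`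
whose members have the character `c` immediately to their left. -/
noncomputable def repLen (w : List α) (c : Option α) : ℕ :=
  sInf {ℓ : ℕ | ∃ u ∈ palSufs w, w[w.length - u.length - 1]? = c ∧ u.length = ℓ}

/-- The 1-based identifier of the suffix-pal-group of `w` with left character `c`:
identifiers are assigned in increasing order of the representatives' lengths. -/
noncomputable def groupIdOf (w : List α) (c : Option α) : ℕ :=
  Set.ncard {c' | c' ∈ palSufGroups w ∧ repLen w c' ≤ repLen w c}

/-- `sspgAt w i` : `∞` if `sspAt w i = ∞`, and otherwise the identifier of the
suffix-pal-group of `w[1..i-1]` containing the palindromic suffix of `w[1..i-1]`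
of length `sspAt w i - 2`. -/
noncomputable def sspgAt (w : List α) (i : ℕ) : ℕ∞ :=
  if sspAt w i = ⊤ then ⊤
  else (groupIdOf (w.take (i - 1))
        ((w.take (i - 1))[(i - 1) - ((sspAt w i).toNat - 2) - 1]?) : ℕ∞)

/-- `π(w) = sspg_{reverse w}[|w|]`. -/
noncomputable def piEnc (w : List α) : ℕ∞ := sspgAt w.reverse w.length

/-!
Prepending `c` to `x'` changes the ssp-sequence in a single entry: `ssp (c :: x')` is `⊤` followed
by `ssp x'` with its (infinite) entry at index `g` replaced by `g + 2`, where `g` is the length of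
the shortest palindromic prefix of `x'` followed by `c` (`g = |x'|` if there is none). Reading
`c :: x'` backwards, `π(c :: x')` is the rank of `g` among the lengths of such shortest prefixes,
which are the representatives of the suffix-pal-groups of `reverse x'`, or `∞` if there is none.
Both orders therefore compare `g` for `x'` with `g` for `y'`, once we know that the representatives
agree. They do, because the ssp-sequence determines all palindromic suffixes of all prefixes, by
induction along the string.
-/

open List

theorem isPal_cons_append_singleton {a b : α} {u : List α} :
    IsPal (a :: (u ++ [b])) ↔ a = b ∧ IsPal u := by
  simp only [IsPal, reverse_cons, reverse_append, reverse_nil, nil_append, cons_append, cons.injEq,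
    append_singleton_inj]
  tauto

theorem IsPal.reverse_eq {l : List α} (h : IsPal l) : l.reverse = l := h

theorem IsPal.reverse {l : List α} (h : IsPal l) : IsPal l.reverse := by
  rw [IsPal, reverse_reverse, h]

theorem List.IsSuffix.eq_of_length_eq {u₁ u₂ l : List α} (h₁ : u₁ <:+ l) (h₂ : u₂ <:+ l)
    (h : u₁.length = u₂.length) : u₁ = u₂ :=
  (suffix_of_suffix_length_le h₁ h₂ h.le).eq_of_length h

def HasPalSuffix (w : List α) (m t : ℕ) : Prop :=
  ∃ u, u <:+ w.take m ∧ IsPal u ∧ u.length = t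

theorem hasPalSuffix_zero (w : List α) (m : ℕ) : HasPalSuffix w m 0 :=
  ⟨[], nil_suffix, rfl, rfl⟩

theorem HasPalSuffix.le {w : List α} {m t : ℕ} (h : HasPalSuffix w m t) :
    t ≤ m ∧ t ≤ w.length := by
  obtain ⟨u, hu, -, rfl⟩ := h
  simpa using hu.length_le

theorem hasPalSuffix_one {w : List α} {m : ℕ} (hm : 1 ≤ m) (hw : 1 ≤ w.length) :
    HasPalSuffix w m 1 := by
  obtain he | ⟨L, b, he⟩ := eq_nil_or_concat (w.take m)
  · have := congrArg length he
    rw [length_take, length_nil] at this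
    omega
  · exact ⟨[b], ⟨L, by rw [he, concat_eq_append]⟩, rfl, rfl⟩

theorem hasPalSuffix_take_self (w : List α) (m t : ℕ) :
    HasPalSuffix (w.take m) m t ↔ HasPalSuffix w m t := by
  rw [HasPalSuffix, HasPalSuffix, take_take, min_self]

theorem hasPalSuffix_self_iff {w : List α} {j : ℕ} (hj : j ≤ w.length) :
    HasPalSuffix w j j ↔ IsPal (w.take j) := by
  refine ⟨fun ⟨u, hu, hp, hl⟩ => ?_, fun hp => ⟨w.take j, suffix_rfl, hp, by simp [hj]⟩⟩
  rwa [hu.eq_of_length (by simp [hl, hj])] at hp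

theorem hasPalSuffix_reverse_iff {v : List α} {t : ℕ} :
    HasPalSuffix v.reverse v.length t ↔ t ≤ v.length ∧ IsPal (v.take t) := by
  rw [HasPalSuffix, take_of_length_le (l := v.reverse) (by simp)]
  constructor
  · rintro ⟨u, hu, hp, rfl⟩
    have hpre : u.reverse <+: v := by simpa using reverse_prefix.2 hu
    refine ⟨by simpa using hu.length_le, ?_⟩
    rw [← length_reverse, ← prefix_iff_eq_take.1 hpre]
    exact hp.reverse
  · rintro ⟨ht, hp⟩
    refine ⟨(v.take t).reverse, reverse_suffix.2 (take_prefix t v), hp.reverse, by simp [ht]⟩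

theorem sspAt_le {w : List α} {i t : ℕ} (ht : 2 ≤ t) (h : HasPalSuffix w i t) :
    sspAt w i ≤ t := by
  obtain ⟨u, hu, hp, rfl⟩ := h
  exact sInf_le ⟨u, hu, hp, ht, rfl⟩

theorem sspAt_eq_top_iff {w : List α} {i : ℕ} :
    sspAt w i = ⊤ ↔ ∀ t, 2 ≤ t → ¬ HasPalSuffix w i t := by
  refine ⟨fun h t ht hP => ENat.natCast_ne_top t (top_le_iff.1 (h ▸ sspAt_le ht hP)), fun h => ?_⟩
  rw [sspAt, sInf_eq_top]
  rintro _ ⟨u, hu, hp, h2, rfl⟩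
  exact absurd ⟨u, hu, hp, rfl⟩ (h u.length h2)

theorem exists_length_eq_sspAt {w : List α} {i : ℕ} (h : sspAt w i ≠ ⊤) :
    ∃ u, u <:+ w.take i ∧ IsPal u ∧ 2 ≤ u.length ∧ (u.length : ℕ∞) = sspAt w i := by
  unfold sspAt at h ⊢
  refine csInf_mem (s := {ℓ : ℕ∞ | ∃ u : List α, u <:+ w.take i ∧ IsPal u ∧ 2 ≤ u.length ∧
    (u.length : ℕ∞) = ℓ}) (Set.nonempty_iff_ne_empty.2 fun he => ?_)
  rw [he, sInf_empty] at h
  exact h rfl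

theorem sspAt_eq_coe_iff {w : List α} {i s : ℕ} :
    sspAt w i = s ↔ 2 ≤ s ∧ HasPalSuffix w i s ∧ ∀ t, 2 ≤ t → HasPalSuffix w i t → s ≤ t := by
  constructor
  · intro h
    obtain ⟨u, hu, hp, h2, hs⟩ := exists_length_eq_sspAt (h ▸ ENat.natCast_ne_top s)
    rw [h, Nat.cast_inj] at hs
    subst hs
    exact ⟨h2, ⟨u, hu, hp, rfl⟩, fun t ht hP => by exact_mod_cast h ▸ sspAt_le ht hP⟩
  · rintro ⟨h2, hP, hmin⟩
    refine le_antisymm (sspAt_le h2 hP) (le_sInf ?_)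
    rintro _ ⟨u, hu, hp, hu2, rfl⟩
    exact_mod_cast hmin u.length hu2 ⟨u, hu, hp, rfl⟩

def SuffixPrecededBy (w : List α) (m g : ℕ) (a : α) : Prop :=
  ∃ z u : List α, w.take m = z ++ a :: u ∧ u.length = g

theorem suffixPrecededBy_iff {w : List α} {m g : ℕ} {a : α} (hm : m ≤ w.length) :
    SuffixPrecededBy w m g a ↔ g < m ∧ w[m - g - 1]? = some a := by
  constructor
  · rintro ⟨z, u, he, rfl⟩
    have hlen : m = z.length + (u.length + 1) := by simpa [hm] using congrArg length he
    refine ⟨by omega, ?_⟩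
    rw [← getElem?_take_of_lt (show m - u.length - 1 < m by omega), he,
      getElem?_append_right (by omega), show m - u.length - 1 - z.length = 0 by omega]
    rfl
  · rintro ⟨hg, ha⟩
    refine ⟨w.take (m - g - 1), (w.take m).drop (m - g), ?_, by simp; omega⟩
    have hi : m - g - 1 < (w.take m).length := by simp; omega
    rw [← getElem?_take_of_lt (show m - g - 1 < m by omega), getElem?_eq_getElem hi,
      Option.some_inj] at ha
    conv_lhs => rw [← take_append_drop (m - g - 1) (w.take m), drop_eq_getElem_cons hi, ha]
    rw [take_take, min_eq_left (by omega), show m - g - 1 + 1 = m - g by omega]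

theorem exists_suffixPrecededBy {w : List α} {m g : ℕ} (hg : g < m) (hm : m ≤ w.length) :
    ∃ a, SuffixPrecededBy w m g a :=
  ⟨_, (suffixPrecededBy_iff hm).2 ⟨hg, getElem?_eq_getElem (by omega)⟩⟩

theorem hasPalSuffix_add_two_iff {w : List α} {m g : ℕ} (hm : m < w.length) :
    HasPalSuffix w (m + 1) (g + 2) ↔ HasPalSuffix w m g ∧ SuffixPrecededBy w m g w[m] := by
  have htake : w.take (m + 1) = w.take m ++ [w[m]] := by
    rw [take_add_one, getElem?_eq_getElem hm, Option.toList_some]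
  constructor
  · rintro ⟨v, ⟨z, hz⟩, hp, hl⟩
    obtain ⟨a, q, b, rfl⟩ : ∃ a q b, v = a :: (q ++ [b]) := by
      match v, hl with
      | a :: r, hl =>
        obtain ⟨q, b, rfl⟩ := (eq_nil_or_concat r).resolve_left (by rintro rfl; simp at hl)
        exact ⟨a, q, b, by simp⟩
    obtain ⟨rfl, hq⟩ := isPal_cons_append_singleton.1 hp
    rw [htake, ← cons_append, ← append_assoc] at hz
    obtain ⟨hz, hb⟩ := append_inj' hz rfl
    obtain rfl : a = w[m] := by simpa using hb
    exact ⟨⟨q, ⟨z ++ [w[m]], by simp [← hz]⟩, hq, by simpa using hl⟩, z, q, by simp [← hz],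
      by simpa using hl⟩
  · rintro ⟨⟨u, hu, hp, hl⟩, z, u', he, hl'⟩
    have hu' : u' <:+ w.take m := ⟨z ++ [w[m]], by simp [he]⟩
    obtain rfl : u' = u := hu'.eq_of_length_eq hu (by rw [hl, hl'])
    exact ⟨w[m] :: (u' ++ [w[m]]), ⟨z, by simp [htake, he]⟩,
      isPal_cons_append_singleton.2 ⟨rfl, hp⟩, by simp [hl]⟩

/-- Reflecting the inner palindrome `u` in the outer palindrome `v ++ a₁ :: u` moves the
character `a₁` to just after a copy of `u` at the start, next to `a₂`. -/
theorem eq_iff_hasPalSuffix_of_take_eq {w : List α} {m : ℕ} {z v u : List α} {a₁ a₂ : α}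
    (hu : IsPal u) (hvu : IsPal (v ++ a₁ :: u)) (hz : w.take m = z ++ a₂ :: (v ++ a₁ :: u)) :
    a₂ = a₁ ↔ HasPalSuffix w (z.length + u.length + 2) (u.length + 2) := by
  have hvu' : v ++ a₁ :: u = u ++ a₁ :: v.reverse := by
    conv_lhs => rw [← hvu]
    simp [hu.reverse_eq]
  have hm : z.length + u.length + 2 ≤ m := by
    have := congrArg length hz
    simp only [length_take, length_append, length_cons] at this
    omega
  have htake : w.take (z.length + u.length + 2) = z ++ a₂ :: (u ++ [a₁]) := by
    rw [show z.length + u.length + 2 = min (z.length + (u.length + 2)) m by omega, ← take_take,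
      hz, hvu', take_length_add_append, take_succ_cons, take_length_add_append]
    simp
  have hsuf : (a₂ :: (u ++ [a₁])) <:+ w.take (z.length + u.length + 2) := ⟨z, htake.symm⟩
  constructor
  · intro he
    exact ⟨_, hsuf, isPal_cons_append_singleton.2 ⟨he, hu⟩, by simp⟩
  · rintro ⟨u', hu', hp', hl'⟩
    obtain rfl := hu'.eq_of_length_eq hsuf (by simp [hl'])
    exact (isPal_cons_append_singleton.1 hp').1

theorem SuffixPrecededBy.exists_isPal {w : List α} {m g : ℕ} {a : α}
    (ha : SuffixPrecededBy w m g a) (hg : HasPalSuffix w m g) :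
    ∃ z u, w.take m = z ++ a :: u ∧ IsPal u ∧ u.length = g := by
  obtain ⟨z, u, he, hl⟩ := ha
  obtain ⟨u₀, hu₀, hp, hl₀⟩ := hg
  have hu : u <:+ w.take m := ⟨z ++ [a], by simp [he]⟩
  obtain rfl := hu.eq_of_length_eq hu₀ (hl.trans hl₀.symm)
  exact ⟨z, u, he, hp, hl⟩

theorem suffixPrecededBy_eq_iff {w : List α} {m g g' : ℕ} {a a' : α} (hm : m ≤ w.length)
    (hg : HasPalSuffix w m g) (hg' : HasPalSuffix w m g') (hlt : g < g')
    (ha : SuffixPrecededBy w m g a) (ha' : SuffixPrecededBy w m g' a') :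
    a' = a ↔ HasPalSuffix w (m - g' + g + 1) (g + 2) := by
  obtain ⟨z, u, he, hu, rfl⟩ := ha.exists_isPal hg
  obtain ⟨z', u', he', hu', rfl⟩ := ha'.exists_isPal hg'
  obtain ⟨v, rfl⟩ : a :: u <:+ u' :=
    suffix_of_suffix_length_le ⟨z, he.symm⟩ ⟨z' ++ [a'], by simp [he']⟩ (by simpa using hlt)
  have hlen : m = z'.length + (v ++ a :: u).length + 1 := by
    simpa [hm, ← Nat.add_assoc] using congrArg length he'
  rw [eq_iff_hasPalSuffix_of_take_eq hu hu' he',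
    show m - (v ++ a :: u).length + u.length + 1 = z'.length + u.length + 2 by omega]

theorem SuffixPrecededBy.iff_eq {w : List α} {m g : ℕ} {a b : α}
    (ha : SuffixPrecededBy w m g a) : SuffixPrecededBy w m g b ↔ b = a := by
  refine ⟨fun ⟨z', u', he', hl'⟩ => ?_, fun h => h ▸ ha⟩
  obtain ⟨z, u, he, hl⟩ := ha
  rw [he] at he'
  exact (cons_eq_cons.1 (append_inj' he' (by simp [hl, hl'])).2).1.symm

/-- A palindromic suffix of length `g` extends iff it is preceded by the same character as the one
of length `g₀`; by reflection inside the longer of the two, that is a palindrome ending earlier. -/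
theorem hasPalSuffix_add_two_iff_of_sspAt_eq {w : List α} {m g g₀ : ℕ} (hm : m < w.length)
    (h₀ : sspAt w (m + 1) = (g₀ + 2 : ℕ)) :
    HasPalSuffix w (m + 1) (g + 2) ↔ HasPalSuffix w m g ∧
      (g = g₀ ∨ (g < g₀ ∧ HasPalSuffix w (m - g₀ + g + 1) (g + 2)) ∨
        (g₀ < g ∧ HasPalSuffix w (m - g + g₀ + 1) (g₀ + 2))) := by
  obtain ⟨hP₀, hpre₀⟩ := (hasPalSuffix_add_two_iff hm).1 (sspAt_eq_coe_iff.1 h₀).2.1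
  have hg₀ : g₀ < m := ((suffixPrecededBy_iff hm.le).1 hpre₀).1
  rw [hasPalSuffix_add_two_iff hm]
  refine and_congr_right fun hP => ?_
  rcases lt_trichotomy g g₀ with hlt | rfl | hgt
  · obtain ⟨a, ha⟩ := exists_suffixPrecededBy (hlt.trans hg₀) hm.le
    simp only [hlt, hlt.ne, hlt.not_gt, true_and, false_and, false_or, or_false, ha.iff_eq]
    exact suffixPrecededBy_eq_iff hm.le hP hP₀ hlt ha hpre₀
  · simp [hpre₀]
  · simp only [hgt, hgt.ne', hgt.not_gt, true_and, false_and, false_or]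
    by_cases hgm : g < m
    · obtain ⟨a, ha⟩ := exists_suffixPrecededBy hgm hm.le
      rw [ha.iff_eq, eq_comm]
      exact suffixPrecededBy_eq_iff hm.le hP₀ hP hgt hpre₀ ha
    · refine iff_of_false (fun h => hgm ((suffixPrecededBy_iff hm.le).1 h).1) fun h => ?_
      have := h.le
      omega

theorem sspAt_eq_top_of_le_one {w : List α} {i : ℕ} (hi : i ≤ 1) : sspAt w i = ⊤ :=
  sspAt_eq_top_iff.2 fun t ht hP => by have := hP.le; omega

theorem sspAt_min_length (w : List α) (i : ℕ) : sspAt w (min i w.length) = sspAt w i := by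
  rw [sspAt, sspAt, ← take_eq_take_min]

theorem getElem?_ssp {w : List α} {k : ℕ} (hk : k < w.length) :
    (ssp w)[k]? = some (sspAt w (k + 1)) := by
  simp [ssp, hk]

theorem length_ssp (w : List α) : (ssp w).length = w.length := by
  simp [ssp]

theorem sspAt_eq_of_ssp_eq {x y : List α} (h : ssp x = ssp y) (i : ℕ) :
    sspAt x i = sspAt y i := by
  have hlen : x.length = y.length := by rw [← length_ssp, h, length_ssp]
  rw [← sspAt_min_length, ← sspAt_min_length y, ← hlen]
  cases hk : min i x.length with
  | zero => rw [sspAt_eq_top_of_le_one zero_le_one, sspAt_eq_top_of_le_one zero_le_one]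
  | succ k =>
    have hkx : k < x.length := by omega
    rw [← Option.some_inj, ← getElem?_ssp hkx, h, getElem?_ssp (hlen ▸ hkx)]

theorem hasPalSuffix_iff_of_ssp_eq {x y : List α} (h : ssp x = ssp y) {m t : ℕ}
    (hm : m ≤ x.length) : HasPalSuffix x m t ↔ HasPalSuffix y m t := by
  have hlen : x.length = y.length := by rw [← length_ssp, h, length_ssp]
  induction m using Nat.strong_induction_on generalizing t with
  | _ m IH =>
    match t, m with
    | 0, _ => exact iff_of_true (hasPalSuffix_zero x _) (hasPalSuffix_zero y _)
    | 1, m =>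
      constructor <;> intro hP <;> have := hP.le <;> exact hasPalSuffix_one (by omega) (by omega)
    | g + 2, 0 =>
      exact iff_of_false (fun hP => by have := hP.le; omega) (fun hP => by have := hP.le; omega)
    | g + 2, m + 1 =>
      cases hs : sspAt x (m + 1) using ENat.recTopCoe with
      | top =>
        have hs' := sspAt_eq_of_ssp_eq h (m + 1) ▸ hs
        exact iff_of_false (sspAt_eq_top_iff.1 hs _ (by omega))
          (sspAt_eq_top_iff.1 hs' _ (by omega))
      | coe s =>
        obtain ⟨hs2, hP₀, -⟩ := sspAt_eq_coe_iff.1 hs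
        obtain ⟨g₀, rfl⟩ : ∃ g₀, s = g₀ + 2 := ⟨s - 2, by omega⟩
        have hg₀ := hP₀.le
        rw [hasPalSuffix_add_two_iff_of_sspAt_eq (g := g) hm hs,
          hasPalSuffix_add_two_iff_of_sspAt_eq (w := y) (m := m) (g := g) (hlen ▸ hm)
            (sspAt_eq_of_ssp_eq h _ ▸ hs)]
        exact and_congr (IH m (by omega) (by omega)) (or_congr_right (or_congr
          (and_congr_right fun _ => IH _ (by omega) (by omega))
          (and_congr_right fun _ => IH _ (by omega) (by omega))))

def palPrefixesFollowedBy (w : List α) (a : α) : Set ℕ :=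
  {j | IsPal (w.take j) ∧ w[j]? = some a}

theorem lt_length_of_mem_palPrefixesFollowedBy {w : List α} {a : α} {j : ℕ}
    (hj : j ∈ palPrefixesFollowedBy w a) : j < w.length :=
  (List.getElem?_eq_some_iff.1 hj.2).1

theorem isPal_cons_take_succ_iff {w : List α} {c : α} {k : ℕ} (hk : k < w.length) :
    IsPal (c :: w.take (k + 1)) ↔ k ∈ palPrefixesFollowedBy w c := by
  rw [take_add_one, getElem?_eq_getElem hk, Option.toList_some, isPal_cons_append_singleton,
    palPrefixesFollowedBy, Set.mem_ofPred_eq, getElem?_eq_getElem hk, Option.some_inj, eq_comm,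
    and_comm]

theorem hasPalSuffix_reverse_cons_iff {w : List α} {c : α} {k : ℕ} :
    HasPalSuffix (c :: w).reverse (w.length + 1) (k + 2) ↔ k ∈ palPrefixesFollowedBy w c := by
  rw [show w.length + 1 = (c :: w).length from rfl, hasPalSuffix_reverse_iff, length_cons,
    take_succ_cons]
  constructor
  · rintro ⟨hk, hp⟩
    exact (isPal_cons_take_succ_iff (by omega)).1 hp
  · intro hk
    have hkw := lt_length_of_mem_palPrefixesFollowedBy hk
    exact ⟨by omega, (isPal_cons_take_succ_iff hkw).2 hk⟩

theorem hasPalSuffix_add_two_iff_of_isPal {w : List α} {j k : ℕ} (hj : j < w.length)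
    (hp : IsPal (w.take j)) :
    HasPalSuffix w (j + 1) (k + 2) ↔ k < j ∧ k ∈ palPrefixesFollowedBy w w[j] := by
  have hv : w.take (j + 1) = (w[j] :: w.take j).reverse := by
    rw [take_add_one, getElem?_eq_getElem hj, reverse_cons, hp.reverse_eq, Option.toList_some]
  rw [← hasPalSuffix_take_self, hv, show j + 1 = (w.take j).length + 1 by simp [hj.le],
    hasPalSuffix_reverse_cons_iff]
  simp only [palPrefixesFollowedBy, take_take, getElem?_take, Option.ite_none_right_eq_some,
    Set.mem_ofPred_eq]
  exact ⟨fun ⟨h1, h2, h3⟩ => ⟨h2, by rwa [min_eq_left h2.le] at h1, h3⟩,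
    fun ⟨h2, h1, h3⟩ => ⟨by rwa [min_eq_left h2.le], h2, h3⟩⟩

theorem sspAt_succ_eq_top_iff_of_mem {w : List α} {a : α} {j : ℕ}
    (hj : j ∈ palPrefixesFollowedBy w a) :
    sspAt w (j + 1) = ⊤ ↔ ∀ k ∈ palPrefixesFollowedBy w a, j ≤ k := by
  obtain ⟨hjw, rfl⟩ := List.getElem?_eq_some_iff.1 hj.2
  rw [sspAt_eq_top_iff]
  constructor
  · intro h k hk
    by_contra hkj
    exact h (k + 2) le_add_self ((hasPalSuffix_add_two_iff_of_isPal hjw hj.1).2 ⟨by omega, hk⟩)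
  · intro h t ht hP
    obtain ⟨k, rfl⟩ : ∃ k, t = k + 2 := ⟨t - 2, by omega⟩
    obtain ⟨hkj, hk⟩ := (hasPalSuffix_add_two_iff_of_isPal hjw hj.1).1 hP
    exact absurd (h k hk) (by omega)

/-- `w.length` if no palindromic prefix of `w` is followed by `a`, so that `List.set` at it is a
no-op. -/
noncomputable def firstPalPrefix (w : List α) (a : α) : ℕ :=
  sInf (insert w.length (palPrefixesFollowedBy w a))

/-- Read on `w`, these are the lengths of the representatives of the suffix-pal-groups of
`w.reverse`. -/
def palPrefixReps (w : List α) : Set ℕ :=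
  {j | j < w.length ∧ IsPal (w.take j) ∧ sspAt w (j + 1) = ⊤}

theorem firstPalPrefix_le_length (w : List α) (a : α) : firstPalPrefix w a ≤ w.length :=
  Nat.sInf_le (Set.mem_insert _ _)

theorem firstPalPrefix_le {w : List α} {a : α} {j : ℕ} (hj : j ∈ palPrefixesFollowedBy w a) :
    firstPalPrefix w a ≤ j :=
  Nat.sInf_le (Set.mem_insert_of_mem _ hj)

theorem firstPalPrefix_mem {w : List α} {a : α} (h : firstPalPrefix w a < w.length) :
    firstPalPrefix w a ∈ palPrefixesFollowedBy w a :=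
  (Nat.sInf_mem (Set.insert_nonempty _ _)).resolve_left h.ne

theorem firstPalPrefix_eq_iff {w : List α} {a : α} {j : ℕ} (hj : j < w.length) :
    firstPalPrefix w a = j ↔ j ∈ palPrefixesFollowedBy w a ∧ sspAt w (j + 1) = ⊤ := by
  constructor
  · rintro rfl
    have hmem := firstPalPrefix_mem hj
    exact ⟨hmem, (sspAt_succ_eq_top_iff_of_mem hmem).2 fun k hk => firstPalPrefix_le hk⟩
  · rintro ⟨hmem, htop⟩
    refine le_antisymm (firstPalPrefix_le hmem) (le_csInf (Set.insert_nonempty _ _) ?_)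
    rintro k (rfl | hk)
    exacts [hj.le, (sspAt_succ_eq_top_iff_of_mem hmem).1 htop k hk]

theorem firstPalPrefix_mem_palPrefixReps {w : List α} {a : α}
    (h : firstPalPrefix w a < w.length) : firstPalPrefix w a ∈ palPrefixReps w := by
  obtain ⟨hmem, htop⟩ := (firstPalPrefix_eq_iff h).1 rfl
  exact ⟨h, hmem.1, htop⟩

theorem firstPalPrefix_eq_of_mem_palPrefixReps {w : List α} {a : α} {j : ℕ}
    (hj : j ∈ palPrefixReps w) (ha : w[j]? = some a) : firstPalPrefix w a = j :=
  (firstPalPrefix_eq_iff hj.1).2 ⟨⟨hj.2.1, ha⟩, hj.2.2⟩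

theorem firstPalPrefix_mem_insert (w : List α) (a : α) :
    firstPalPrefix w a ∈ insert w.length (palPrefixReps w) := by
  rcases (firstPalPrefix_le_length w a).lt_or_eq with h | h
  exacts [Or.inr (firstPalPrefix_mem_palPrefixReps h), Or.inl h]

theorem firstPalPrefix_add_two_lt_ssp (w : List α) (a : α) :
    ∀ v ∈ (ssp w)[firstPalPrefix w a]?, ((firstPalPrefix w a + 2 : ℕ) : ℕ∞) < v := by
  intro v hv
  have hg : firstPalPrefix w a < w.length := by
    simpa [length_ssp] using (List.getElem?_eq_some_iff.1 hv).1
  rw [getElem?_ssp hg, (firstPalPrefix_mem_palPrefixReps hg).2.2, Option.mem_some_iff] at hv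
  exact hv ▸ ENat.natCast_lt_top _

theorem palPrefixReps_eq_of_ssp_eq {x y : List α} (h : ssp x = ssp y) :
    palPrefixReps x = palPrefixReps y := by
  have hlen : x.length = y.length := by rw [← length_ssp, h, length_ssp]
  ext j
  simp only [palPrefixReps, Set.mem_ofPred_eq, sspAt_eq_of_ssp_eq h, ← hlen]
  refine and_congr_right fun hj => and_congr_left fun _ => ?_
  rw [← hasPalSuffix_self_iff hj.le, ← hasPalSuffix_self_iff (hlen ▸ hj.le),
    hasPalSuffix_iff_of_ssp_eq h hj.le]

theorem hasPalSuffix_cons_succ_iff {w : List α} {c : α} {i t : ℕ} (hi : i ≤ w.length) :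
    HasPalSuffix (c :: w) (i + 1) t ↔ HasPalSuffix w i t ∨ (t = i + 1 ∧ IsPal (c :: w.take i)) := by
  rw [HasPalSuffix, take_succ_cons]
  constructor
  · rintro ⟨u, hu, hp, rfl⟩
    rcases suffix_cons_iff.1 hu with rfl | hu'
    · exact Or.inr ⟨by simp [hi], hp⟩
    · exact Or.inl ⟨u, hu', hp, rfl⟩
  · rintro (⟨u, hu, hp, rfl⟩ | ⟨rfl, hp⟩)
    · exact ⟨u, hu.trans (suffix_cons c _), hp, rfl⟩
    · exact ⟨_, suffix_rfl, hp, by simp [hi]⟩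

theorem sspAt_cons_add_two {w : List α} {c : α} {k : ℕ} (hk : k < w.length) :
    sspAt (c :: w) (k + 2) =
      if k = firstPalPrefix w c then ((k + 2 : ℕ) : ℕ∞) else sspAt w (k + 1) := by
  have hcons (t : ℕ) := hasPalSuffix_cons_succ_iff (c := c) (t := t) hk
  split_ifs with hkc
  · obtain ⟨hmem, htop⟩ := (firstPalPrefix_eq_iff hk).1 hkc.symm
    refine sspAt_eq_coe_iff.2 ⟨le_add_self, (hcons _).2 (Or.inr ⟨rfl, ?_⟩), fun t ht hP => ?_⟩
    · exact (isPal_cons_take_succ_iff hk).2 hmem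
    · rcases (hcons t).1 hP with hP | ⟨rfl, -⟩
      exacts [absurd hP (sspAt_eq_top_iff.1 htop t ht), le_rfl]
  cases hs : sspAt w (k + 1) using ENat.recTopCoe with
  | top =>
    refine sspAt_eq_top_iff.2 fun t ht hP => ?_
    rcases (hcons t).1 hP with hP | ⟨rfl, hp⟩
    · exact sspAt_eq_top_iff.1 hs t ht hP
    · exact hkc ((firstPalPrefix_eq_iff hk).2 ⟨(isPal_cons_take_succ_iff hk).1 hp, hs⟩).symm
  | coe s =>
    obtain ⟨hs2, hP, hmin⟩ := sspAt_eq_coe_iff.1 hs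
    refine sspAt_eq_coe_iff.2 ⟨hs2, (hcons _).2 (Or.inl hP), fun t ht hPt => ?_⟩
    rcases (hcons t).1 hPt with hPt | ⟨rfl, -⟩
    · exact hmin t ht hPt
    · exact hP.le.1.trans le_self_add

theorem ssp_cons (w : List α) (c : α) :
    ssp (c :: w) = ⊤ :: (ssp w).set (firstPalPrefix w c) ((firstPalPrefix w c + 2 : ℕ) : ℕ∞) := by
  refine ext_getElem (by simp [length_ssp]) fun i hi _ => ?_
  cases i with
  | zero => simp [ssp, sspAt_eq_top_of_le_one]
  | succ k =>
    have hk : k < w.length := by simpa [length_ssp] using hi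
    simp only [ssp, getElem_map, getElem_range, getElem_cons_succ, getElem_set,
      sspAt_cons_add_two hk]
    by_cases hkc : k = firstPalPrefix w c
    · simp [hkc]
    · simp [hkc, Ne.symm hkc]

theorem sspAt_reverse_cons (w : List α) (c : α) :
    sspAt (c :: w).reverse (w.length + 1) =
      if firstPalPrefix w c < w.length then ((firstPalPrefix w c + 2 : ℕ) : ℕ∞) else ⊤ := by
  split_ifs with hg
  · refine sspAt_eq_coe_iff.2 ⟨le_add_self,
      hasPalSuffix_reverse_cons_iff.2 (firstPalPrefix_mem hg), fun t ht hP => ?_⟩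
    obtain ⟨k, rfl⟩ : ∃ k, t = k + 2 := ⟨t - 2, by omega⟩
    exact Nat.add_le_add_right (firstPalPrefix_le (hasPalSuffix_reverse_cons_iff.1 hP)) 2
  · refine sspAt_eq_top_iff.2 fun t ht hP => hg ?_
    obtain ⟨k, rfl⟩ : ∃ k, t = k + 2 := ⟨t - 2, by omega⟩
    have hk := hasPalSuffix_reverse_cons_iff.1 hP
    exact (firstPalPrefix_le hk).trans_lt (lt_length_of_mem_palPrefixesFollowedBy hk)

theorem exists_palSufs_reverse_iff {w : List α} {c₀ : Option α} {ℓ : ℕ} :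
    (∃ u ∈ palSufs w.reverse, w.reverse[w.reverse.length - u.length - 1]? = c₀ ∧ u.length = ℓ) ↔
      ℓ < w.length ∧ IsPal (w.take ℓ) ∧ w[ℓ]? = c₀ := by
  constructor
  · rintro ⟨u, ⟨hus, hup, hul⟩, hc, rfl⟩
    have hpre : u.reverse <+: w := by simpa using reverse_prefix.2 hus
    rw [length_reverse] at hul hc
    refine ⟨hul, ?_, ?_⟩
    · rw [← length_reverse, ← prefix_iff_eq_take.1 hpre]
      exact hup.reverse
    · rw [← hc, getElem?_reverse (by omega)]
      congr 1
      omega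
  · rintro ⟨hℓ, hp, hc⟩
    refine ⟨(w.take ℓ).reverse, ⟨reverse_suffix.2 (take_prefix ℓ w), hp.reverse, by simp; omega⟩,
      ?_, by simp; omega⟩
    rw [getElem?_reverse (by simp; omega), ← hc]
    congr 1
    simp only [length_reverse, length_take]
    omega

theorem mem_palSufGroups_reverse {w : List α} {c₀ : Option α} :
    c₀ ∈ palSufGroups w.reverse ↔ ∃ a, c₀ = some a ∧ firstPalPrefix w a < w.length := by
  constructor
  · rintro ⟨u, hu, hc⟩
    obtain ⟨hℓ, hp, hc⟩ := exists_palSufs_reverse_iff.1 ⟨u, hu, hc, rfl⟩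
    have hw := getElem?_eq_getElem hℓ
    exact ⟨_, hc ▸ hw, (firstPalPrefix_le ⟨hp, hw⟩).trans_lt hℓ⟩
  · rintro ⟨a, rfl, ha⟩
    obtain ⟨u, hu, hc, -⟩ := exists_palSufs_reverse_iff.2 ⟨ha, firstPalPrefix_mem ha⟩
    exact ⟨u, hu, hc⟩

theorem repLen_reverse {w : List α} {a : α} (h : firstPalPrefix w a < w.length) :
    repLen w.reverse (some a) = firstPalPrefix w a :=
  IsLeast.csInf_eq ⟨exists_palSufs_reverse_iff.2 ⟨h, firstPalPrefix_mem h⟩,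
    fun _ hℓ => firstPalPrefix_le (exists_palSufs_reverse_iff.1 hℓ).2⟩

theorem groupIdOf_reverse {w : List α} {c : α} (h : firstPalPrefix w c < w.length) :
    groupIdOf w.reverse (some c) = {r ∈ palPrefixReps w | r ≤ firstPalPrefix w c}.ncard := by
  have hset : {c₀ | c₀ ∈ palSufGroups w.reverse ∧
      repLen w.reverse c₀ ≤ repLen w.reverse (some c)} =
      (fun r => w[r]?) '' {r ∈ palPrefixReps w | r ≤ firstPalPrefix w c} := by
    ext c₀
    simp only [Set.mem_ofPred_eq, Set.mem_image, mem_palSufGroups_reverse, repLen_reverse h]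
    constructor
    · rintro ⟨⟨a, rfl, ha⟩, hle⟩
      rw [repLen_reverse ha] at hle
      exact ⟨_, ⟨firstPalPrefix_mem_palPrefixReps ha, hle⟩, (firstPalPrefix_mem ha).2⟩
    · rintro ⟨r, ⟨hr, hle⟩, rfl⟩
      have hrw : w[r]? = some w[r] := getElem?_eq_getElem hr.1
      have hfr := firstPalPrefix_eq_of_mem_palPrefixReps hr hrw
      have hlt : firstPalPrefix w w[r] < w.length := hfr.symm ▸ hr.1
      refine ⟨⟨w[r], hrw, hlt⟩, ?_⟩
      rwa [hrw, repLen_reverse hlt, hfr]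
  rw [groupIdOf, hset]
  refine Set.InjOn.ncard_image fun r₁ ⟨hr₁, _⟩ r₂ ⟨hr₂, _⟩ he => ?_
  have ha : w[r₁]? = some (w[r₁]'hr₁.1) := getElem?_eq_getElem hr₁.1
  rw [← firstPalPrefix_eq_of_mem_palPrefixReps hr₁ ha,
    firstPalPrefix_eq_of_mem_palPrefixReps hr₂ ((he : w[r₁]? = w[r₂]?) ▸ ha)]

noncomputable def rankOrTop (R : Set ℕ) (n g : ℕ) : ℕ∞ :=
  if g < n then (({r ∈ R | r ≤ g}.ncard : ℕ) : ℕ∞) else ⊤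

theorem piEnc_cons (w : List α) (c : α) :
    piEnc (c :: w) = rankOrTop (palPrefixReps w) w.length (firstPalPrefix w c) := by
  rw [piEnc, sspgAt, length_cons, sspAt_reverse_cons, rankOrTop]
  by_cases hg : firstPalPrefix w c < w.length
  · have hc : w.reverse[w.length - firstPalPrefix w c - 1]? = some c := by
      rw [getElem?_reverse (by omega), show w.length - 1 - (w.length - firstPalPrefix w c - 1) =
        firstPalPrefix w c by omega]
      exact (firstPalPrefix_mem hg).2
    rw [if_pos hg, if_neg (ENat.natCast_ne_top _), if_pos hg, ENat.toNat_natCast,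
      Nat.add_sub_cancel, Nat.add_sub_cancel, reverse_cons, take_left' length_reverse, hc,
      groupIdOf_reverse hg]
  · simp [hg]

theorem strictMonoOn_rankOrTop {R : Set ℕ} {n : ℕ} (hR : ∀ r ∈ R, r < n) :
    StrictMonoOn (rankOrTop R n) (insert n R) := by
  rintro g - g' hg' hlt
  have hgn : g < n := by
    rcases hg' with rfl | hg'
    exacts [hlt, hlt.trans (hR _ hg')]
  rw [rankOrTop, if_pos hgn, rankOrTop]
  split_ifs with hg'n
  · have hg'R : g' ∈ R := hg'.resolve_left hg'n.ne
    have hssub : {r ∈ R | r ≤ g} ⊂ {r ∈ R | r ≤ g'} :=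
      ⟨fun r ⟨hr, hle⟩ => ⟨hr, hle.trans hlt.le⟩, fun hsub => (hsub ⟨hg'R, le_rfl⟩).2.not_gt hlt⟩
    exact_mod_cast Set.ncard_lt_ncard hssub ((Set.finite_Iic g').subset fun r hr => hr.2)
  · exact ENat.natCast_lt_top _

theorem List.lex_set_of_lt {β : Type*} [LinearOrder β] {s : List β} {a b : ℕ} {u v : β}
    (hab : a < b) (hb : b ≤ s.length) (hu : ∀ x ∈ s[a]?, u < x) :
    Lex (· < ·) (s.set a u) (s.set b v) := by
  induction s generalizing a b with
  | nil => simp at hb; omega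
  | cons x s ih =>
    obtain ⟨b, rfl⟩ : ∃ b', b = b' + 1 := ⟨b - 1, by omega⟩
    cases a with
    | zero => exact Lex.rel (hu x rfl)
    | succ a => exact Lex.cons (ih (by omega) (by simpa using hb) (by simpa using hu))

theorem List.lex_set_set_iff {β : Type*} [LinearOrder β] {s : List β} {f : ℕ → β} {a b : ℕ}
    (ha : a ≤ s.length) (hb : b ≤ s.length) (hfa : ∀ x ∈ s[a]?, f a < x)
    (hfb : ∀ x ∈ s[b]?, f b < x) :
    Lex (· < ·) (s.set a (f a)) (s.set b (f b)) ↔ a < b := by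
  refine ⟨fun h => ?_, fun hab => lex_set_of_lt hab hb hfa⟩
  by_contra hab
  rcases (not_lt.1 hab).lt_or_eq with hba | rfl
  · exact lex_asymm (fun h h' => lt_asymm h h') h (lex_set_of_lt hba ha hfb)
  · exact lex_irrefl lt_irrefl _ h

theorem List.set_eq_set_iff {β : Type*} [LinearOrder β] {s : List β} {f : ℕ → β} {a b : ℕ}
    (ha : a ≤ s.length) (hb : b ≤ s.length) (hfa : ∀ x ∈ s[a]?, f a < x)
    (hfb : ∀ x ∈ s[b]?, f b < x) :
    s.set a (f a) = s.set b (f b) ↔ a = b := by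
  refine ⟨fun h => ?_, fun h => h ▸ rfl⟩
  by_contra hab
  rcases Ne.lt_or_gt hab with hab | hba
  · exact lex_irrefl lt_irrefl _ (h ▸ lex_set_of_lt hab hb hfa)
  · exact lex_irrefl lt_irrefl _ (h ▸ lex_set_of_lt hba ha hfb)

/-- For `x = c·x'` and `y = c'·y'` with `ssp x' = ssp y'`:
(a) `ssp x = ssp y` iff `π(x) = π(y)`; (b) `ssp x ≺ ssp y` iff `π(x) < π(y)`. -/
theorem stmt8 {α : Type*} (c c' : α) (x' y' : List α) (h : ssp x' = ssp y') :
    (ssp (c :: x') = ssp (c' :: y') ↔ piEnc (c :: x') = piEnc (c' :: y')) ∧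
    (List.Lex (· < ·) (ssp (c :: x')) (ssp (c' :: y')) ↔
      piEnc (c :: x') < piEnc (c' :: y')) := by
  have hlen : x'.length = y'.length := by rw [← length_ssp, h, length_ssp]
  have hreps := palPrefixReps_eq_of_ssp_eq h
  have hx := firstPalPrefix_mem_insert x' c
  have hy := firstPalPrefix_mem_insert y' c'
  rw [← hlen, ← hreps] at hy
  have hbx : firstPalPrefix x' c ≤ (ssp x').length := by
    simpa [length_ssp] using firstPalPrefix_le_length x' c
  have hby : firstPalPrefix y' c' ≤ (ssp x').length := by
    simpa [h, length_ssp] using firstPalPrefix_le_length y' c'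
  have hsy := firstPalPrefix_add_two_lt_ssp y' c'
  rw [← h] at hsy
  have hmono := strictMonoOn_rankOrTop (R := palPrefixReps x') fun r hr => hr.1
  rw [ssp_cons, ssp_cons, ← h, piEnc_cons, piEnc_cons, ← hlen, ← hreps, cons_inj_right,
    lex_cons_iff, set_eq_set_iff (f := fun g => ((g + 2 : ℕ) : ℕ∞)) hbx hby
      (firstPalPrefix_add_two_lt_ssp x' c) hsy,
    lex_set_set_iff (f := fun g => ((g + 2 : ℕ) : ℕ∞)) hbx hby
      (firstPalPrefix_add_two_lt_ssp x' c) hsy,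
    hmono.injOn.eq_iff hx hy, hmono.lt_iff_lt hx hy]
  exact ⟨.rfl, .rfl⟩
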